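/- Quantum Chernoff bound (Audenaert et al.): For all d×d complex positive semidefinite matrices A and B and every s ∈ [0,1], (1/2)·(Tr[A] + Tr[B] − ‖A − B‖₁) ≤ Tr[A^s B^{1−s}]; equivalently, (1/2)·(Tr[A+B] − ‖A−B‖₁) ≤ Q_min(A‖B). -/

import Mathlib

open scoped ComplexOrder Classical

noncomputable section

namespace QHT

variable {ι : Type*} [Fintype ι] [DecidableEq ι]

/-- The former `Matrix.PosSemidef.sqrt` (removed from Mathlib), with its old definition. -/
def psdSqrt {A : Matrix ι ι ℂ} (hA : A.PosSemidef) : Matrix ι ι ℂ :=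
  (hA.1.eigenvectorUnitary : Matrix ι ι ℂ) *
    Matrix.diagonal ((↑) ∘ (Real.sqrt ·) ∘ hA.1.eigenvalues) *
    (star hA.1.eigenvectorUnitary : Matrix ι ι ℂ)

/-- Trace norm of a complex matrix: `Tr[√(Aᴴ A)]`. -/
def traceNorm (A : Matrix ι ι ℂ) : ℝ :=
  ((psdSqrt (Matrix.posSemidef_conjTranspose_mul_self A)).trace).re

/-- A quantum state: positive semidefinite with unit trace. -/
def IsState (ρ : Matrix ι ι ℂ) : Prop := ρ.PosSemidef ∧ ρ.trace = 1

/-- Positive semidefinite square root (junk value `0` off the PSD matrices). -/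
def matSqrt (A : Matrix ι ι ℂ) : Matrix ι ι ℂ :=
  if h : A.PosSemidef then psdSqrt h else 0

/-- Real power of a Hermitian matrix, applying `x ↦ x ^ s` to positive
eigenvalues and `x ↦ 0` to the remaining ones (so `A ^ 0` is the support
projection); junk value `0` off the Hermitian matrices. -/
def matRpow (A : Matrix ι ι ℂ) (s : ℝ) : Matrix ι ι ℂ :=
  if h : A.IsHermitian then
    (h.eigenvectorUnitary : Matrix ι ι ℂ) *
      Matrix.diagonal (fun i =>
        ((if 0 < h.eigenvalues i then (h.eigenvalues i) ^ s else 0 : ℝ) : ℂ)) *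
      (star (h.eigenvectorUnitary : Matrix ι ι ℂ))
  else 0

/-- Fidelity `F(ρ,σ) = ‖√ρ √σ‖₁²`. -/
def Fid (ρ σ : Matrix ι ι ℂ) : ℝ := (traceNorm (matSqrt ρ * matSqrt σ)) ^ 2

/-- Holevo fidelity `F_H(ρ,σ) = (Tr[√ρ √σ])²`. -/
def FidH (ρ σ : Matrix ι ι ℂ) : ℝ := (((matSqrt ρ * matSqrt σ).trace).re) ^ 2

/-- `Q_s(A‖B) = Tr[A^s B^{1-s}]`. -/
def Qs (s : ℝ) (A B : Matrix ι ι ℂ) : ℝ := ((matRpow A s * matRpow B (1 - s)).trace).re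

/-- `Q_min(A‖B) = min_{s ∈ [0,1]} Q_s(A‖B)`. -/
def Qmin (A B : Matrix ι ι ℂ) : ℝ :=
  sInf { x : ℝ | ∃ s ∈ Set.Icc (0 : ℝ) 1, x = Qs s A B }

/-- Bures distance. -/
def dB (ρ σ : Matrix ι ι ℂ) : ℝ := Real.sqrt (2 * (1 - Real.sqrt (Fid ρ σ)))

/-- Quantum Hellinger distance. -/
def dH (ρ σ : Matrix ι ι ℂ) : ℝ := Real.sqrt (2 * (1 - Real.sqrt (FidH ρ σ)))

/-- `n`-fold Kronecker (tensor) power of a matrix. -/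
def tensorPow {d : ℕ} (A : Matrix (Fin d) (Fin d) ℂ) (n : ℕ) :
    Matrix (Fin n → Fin d) (Fin n → Fin d) ℂ :=
  Matrix.of fun i j => ∏ k, A (i k) (j k)

/-- Optimal error probability of symmetric binary quantum hypothesis testing
with `n` copies. -/
def pErr {d : ℕ} (p : ℝ) (ρ : Matrix (Fin d) (Fin d) ℂ) (q : ℝ)
    (σ : Matrix (Fin d) (Fin d) ℂ) (n : ℕ) : ℝ :=
  sInf { x : ℝ | ∃ Λ : Matrix (Fin n → Fin d) (Fin n → Fin d) ℂ,
    Λ.PosSemidef ∧ (1 - Λ).PosSemidef ∧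
    x = p * (((1 - Λ) * tensorPow ρ n).trace).re + q * ((Λ * tensorPow σ n).trace).re }

/-- Sample complexity of symmetric binary quantum hypothesis testing. -/
def sampleComplexity {d : ℕ} (p : ℝ) (ρ : Matrix (Fin d) (Fin d) ℂ) (q : ℝ)
    (σ : Matrix (Fin d) (Fin d) ℂ) (ε : ℝ) : ℕ :=
  sInf { n : ℕ | 1 ≤ n ∧ pErr p ρ q σ n ≤ ε }

/-- Optimal type II error `β_ε(ρ‖σ)` of asymmetric hypothesis testing. -/
def betaErr (ε : ℝ) (ρ σ : Matrix ι ι ℂ) : ℝ :=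
  sInf { x : ℝ | ∃ Λ : Matrix ι ι ℂ, Λ.PosSemidef ∧ (1 - Λ).PosSemidef ∧
    (((1 - Λ) * ρ).trace).re ≤ ε ∧ x = ((Λ * σ).trace).re }

/-- Sample complexity of asymmetric binary quantum hypothesis testing. -/
def sampleComplexityAsym {d : ℕ} (ρ σ : Matrix (Fin d) (Fin d) ℂ) (ε δ : ℝ) : ℕ :=
  sInf { n : ℕ | 1 ≤ n ∧ betaErr ε (tensorPow ρ n) (tensorPow σ n) ≤ δ }

/-- Petz–Rényi divergence `D_α(ρ‖σ)`. -/
def petzRenyi (α : ℝ) (ρ σ : Matrix ι ι ℂ) : ℝ :=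
  (1 / (α - 1)) * Real.log (((matRpow ρ α * matRpow σ (1 - α)).trace).re)

/-- Sandwiched Rényi divergence `D̃_α(ρ‖σ)`. -/
def sandwichedRenyi (α : ℝ) (ρ σ : Matrix ι ι ℂ) : ℝ :=
  (1 / (α - 1)) * Real.log
    (((matRpow (matRpow σ ((1 - α) / (2 * α)) * ρ * matRpow σ ((1 - α) / (2 * α))) α).trace).re)


/-!
Put `C = A + (B - A)⁺`. Then `A ≤ C`, `B ≤ C` (as `C - B = (B - A)⁻`) and
`Tr C - Tr A = Tr (B - A)⁺ = (Tr B - Tr A + ‖A - B‖₁) / 2`. For `0 < s < 1`, operator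
monotonicity of `x ↦ x ^ s` and `x ↦ x ^ (1 - s)` (Löwner–Heinz) gives
`Tr B - Tr A^s B^(1-s) = Tr (B^s - A^s) B^(1-s) ≤ Tr (C^s - A^s) C^(1-s) = Tr C - Tr A^s C^(1-s)
≤ Tr C - Tr A`, which is the bound. The endpoints `s = 0, 1`, where `A ^ 0` is the support
projection rather than `1`, follow by continuity of `Q_s` in `s`.
-/

open Matrix Set
open scoped MatrixOrder Matrix.Norms.L2Operator NNReal

lemma _root_.CFC.rpow_mul_rpow_one_sub {A : Type*} [CStarAlgebra A] [PartialOrder A]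
    [StarOrderedRing A] {a : A} (ha : 0 ≤ a) {s : ℝ} (hs0 : 0 < s) (hs1 : s < 1) :
    a ^ s * a ^ (1 - s) = a := by
  obtain ⟨p, rfl⟩ : ∃ p : ℝ≥0, (p : ℝ) = s := ⟨⟨s, hs0.le⟩, rfl⟩
  obtain ⟨q, hq⟩ : ∃ q : ℝ≥0, (q : ℝ) = 1 - p := ⟨⟨1 - p, by linarith⟩, rfl⟩
  have hp : 0 < p := by exact_mod_cast hs0
  have hq0 : 0 < q := NNReal.coe_pos.mp (by linarith)
  have hpq : p + q = 1 := NNReal.eq (by push_cast; linarith)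
  rw [← hq, ← CFC.nnrpow_eq_rpow hp, ← CFC.nnrpow_eq_rpow hq0, ← CFC.nnrpow_add hp hq0, hpq,
    CFC.nnrpow_one a ha]

lemma psdSqrt_eq_sqrt {M : Matrix ι ι ℂ} (hM : M.PosSemidef) : psdSqrt hM = CFC.sqrt M := by
  rw [CFC.sqrt_eq_real_sqrt M hM.nonneg, cfcₙ_eq_cfc, hM.1.cfc_eq]
  rfl

lemma traceNorm_eq_re_trace_abs (M : Matrix ι ι ℂ) : traceNorm M = (CFC.abs M).trace.re := by
  rw [traceNorm, psdSqrt_eq_sqrt]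
  rfl

lemma matRpow_eq_rpow {M : Matrix ι ι ℂ} (hM : 0 ≤ M) {s : ℝ} (hs : s ≠ 0) :
    matRpow M s = M ^ s := by
  have hH : M.IsHermitian := hM.posSemidef.1
  rw [CFC.rpow_eq_cfc_real hM, hH.cfc_eq, matRpow, dif_pos hH]
  refine congrArg (fun d => _ * Matrix.diagonal d * _) (funext fun i => ?_)
  rcases (hM.posSemidef.eigenvalues_nonneg i).lt_or_eq with h | h
  · simp [h]
  · simp [← h, Real.zero_rpow hs]

lemma continuous_matRpow {M : Matrix ι ι ℂ} (hM : M.IsHermitian) : Continuous (matRpow M) := by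
  have hcoeff : ∀ i, Continuous fun s : ℝ =>
      (if 0 < hM.eigenvalues i then hM.eigenvalues i ^ s else 0 : ℝ) := by
    intro i
    split_ifs with h
    exacts [continuous_const.rpow continuous_id fun _ => Or.inl h.ne', continuous_const]
  show Continuous fun s => matRpow M s
  simp only [matRpow, dif_pos hM]
  exact (continuous_const.matrix_mul (continuous_pi fun i =>
    Complex.continuous_ofReal.comp (hcoeff i)).matrix_diagonal).matrix_mul continuous_const

lemma continuous_Qs {A B : Matrix ι ι ℂ} (hA : A.IsHermitian) (hB : B.IsHermitian) :
    Continuous fun s => Qs s A B :=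
  Complex.continuous_re.comp (((continuous_matRpow hA).matrix_mul
    ((continuous_matRpow hB).comp (continuous_const.sub continuous_id))).matrix_trace)

lemma re_trace_mul_nonneg {P Q : Matrix ι ι ℂ} (hP : 0 ≤ P) (hQ : 0 ≤ Q) :
    0 ≤ (P * Q).trace.re := by
  have hS : IsSelfAdjoint (CFC.sqrt Q) := (CFC.sqrt_nonneg Q).isSelfAdjoint
  have hconj : 0 ≤ CFC.sqrt Q * P * CFC.sqrt Q := by
    simpa [hS.star_eq] using star_left_conjugate_nonneg hP (CFC.sqrt Q)
  have htrace : (P * Q).trace = (CFC.sqrt Q * P * CFC.sqrt Q).trace := by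
    conv_lhs => rw [← CFC.sqrt_mul_sqrt_self Q hQ, ← mul_assoc, trace_mul_cycle]
  rw [htrace]
  exact (Complex.nonneg_iff.mp hconj.posSemidef.trace_nonneg).1

lemma re_trace_mul_le_re_trace_mul {X Y P : Matrix ι ι ℂ} (hXY : X ≤ Y) (hP : 0 ≤ P) :
    (X * P).trace.re ≤ (Y * P).trace.re := by
  have := re_trace_mul_nonneg (sub_nonneg.mpr hXY) hP
  rwa [sub_mul, trace_sub, Complex.sub_re, sub_nonneg] at this

lemma re_trace_mul_le_re_trace_mul_left {X Y P : Matrix ι ι ℂ} (hXY : X ≤ Y) (hP : 0 ≤ P) :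
    (P * X).trace.re ≤ (P * Y).trace.re := by
  rw [trace_mul_comm P, trace_mul_comm P]
  exact re_trace_mul_le_re_trace_mul hXY hP

lemma re_trace_sub_re_trace_rpow_mul_rpow_le {A B C : Matrix ι ι ℂ} (hA : 0 ≤ A) (hB : 0 ≤ B)
    (hAC : A ≤ C) (hBC : B ≤ C) {s : ℝ} (hs0 : 0 < s) (hs1 : s < 1) :
    B.trace.re - (A ^ s * B ^ (1 - s)).trace.re ≤ C.trace.re - A.trace.re := by
  have hC : 0 ≤ C := hA.trans hAC
  have hs : s ∈ Icc 0 1 := ⟨hs0.le, hs1.le⟩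
  have hs' : 1 - s ∈ Icc 0 1 := ⟨by linarith, by linarith⟩
  calc B.trace.re - (A ^ s * B ^ (1 - s)).trace.re
      = ((B ^ s - A ^ s) * B ^ (1 - s)).trace.re := by
        rw [sub_mul, trace_sub, Complex.sub_re, CFC.rpow_mul_rpow_one_sub hB hs0 hs1]
    _ ≤ ((C ^ s - A ^ s) * B ^ (1 - s)).trace.re :=
        re_trace_mul_le_re_trace_mul (sub_le_sub_right (CFC.rpow_le_rpow hs hBC) _)
          CFC.rpow_nonneg
    _ ≤ ((C ^ s - A ^ s) * C ^ (1 - s)).trace.re :=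
        re_trace_mul_le_re_trace_mul_left (CFC.rpow_le_rpow hs' hBC)
          (sub_nonneg.mpr (CFC.rpow_le_rpow hs hAC))
    _ = C.trace.re - (A ^ s * C ^ (1 - s)).trace.re := by
        rw [sub_mul, trace_sub, Complex.sub_re, CFC.rpow_mul_rpow_one_sub hC hs0 hs1]
    _ ≤ C.trace.re - (A ^ s * A ^ (1 - s)).trace.re :=
        sub_le_sub_left
          (re_trace_mul_le_re_trace_mul_left (CFC.rpow_le_rpow hs' hAC) CFC.rpow_nonneg) _
    _ = C.trace.re - A.trace.re := by rw [CFC.rpow_mul_rpow_one_sub hA hs0 hs1]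

lemma half_sub_traceNorm_le_re_trace_rpow_mul_rpow {A B : Matrix ι ι ℂ} (hA : 0 ≤ A)
    (hB : 0 ≤ B) {s : ℝ} (hs0 : 0 < s) (hs1 : s < 1) :
    (1 / 2) * (A.trace.re + B.trace.re - traceNorm (A - B)) ≤ (A ^ s * B ^ (1 - s)).trace.re := by
  have hD : IsSelfAdjoint (B - A) := hB.isSelfAdjoint.sub hA.isSelfAdjoint
  have hBC : B ≤ A + (B - A)⁺ := by
    have hneg : A + (B - A)⁺ - B = (B - A)⁻ :=
      calc A + (B - A)⁺ - B = ((B - A)⁺ - (B - A)⁻) - (B - A) + (B - A)⁻ := by abel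
        _ = (B - A)⁻ := by rw [CFC.posPart_sub_negPart _ hD, sub_self, zero_add]
    exact sub_nonneg.mp (hneg ▸ CFC.negPart_nonneg _)
  have hchain := re_trace_sub_re_trace_rpow_mul_rpow_le hA hB
    (le_add_of_nonneg_right (CFC.posPart_nonneg _)) hBC hs0 hs1
  have hpos : 2 * ((B - A)⁺).trace.re = traceNorm (A - B) + (B - A).trace.re := by
    rw [traceNorm_eq_re_trace_abs, ← neg_sub B A, CFC.abs_neg, ← Complex.add_re, ← trace_add,
      CFC.abs_add_self _ hD, trace_smul]
    simp
  simp only [trace_add, trace_sub, Complex.add_re, Complex.sub_re] at hchain hpos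
  linarith

/-- **Quantum Chernoff bound** (Audenaert et al.): for positive semidefinite
`A, B` and every `s ∈ [0,1]`,
`(1/2)(Tr A + Tr B − ‖A−B‖₁) ≤ Tr[A^s B^{1-s}]`; equivalently the left-hand
side is at most `Q_min(A‖B)`. -/
theorem quantum_chernoff_bound {ι : Type*} [Fintype ι] [DecidableEq ι]
    (A B : Matrix ι ι ℂ) (hA : A.PosSemidef) (hB : B.PosSemidef) :
    (∀ s ∈ Set.Icc (0 : ℝ) 1,
      (1 / 2) * ((A.trace).re + (B.trace).re - traceNorm (A - B)) ≤ Qs s A B) ∧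
    (1 / 2) * (((A + B).trace).re - traceNorm (A - B)) ≤ Qmin A B := by
  have hIoo : Ioo (0 : ℝ) 1 ⊆
      {s | (1 / 2) * ((A.trace).re + (B.trace).re - traceNorm (A - B)) ≤ Qs s A B} := by
    intro s ⟨hs0, hs1⟩
    rw [mem_ofPred_eq, Qs, matRpow_eq_rpow hA.nonneg hs0.ne',
      matRpow_eq_rpow hB.nonneg (sub_pos.mpr hs1).ne']
    exact half_sub_traceNorm_le_re_trace_rpow_mul_rpow hA.nonneg hB.nonneg hs0 hs1
  have hIcc := closure_Ioo (zero_ne_one' ℝ) ▸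
    closure_minimal hIoo (isClosed_le continuous_const (continuous_Qs hA.1 hB.1))
  refine ⟨hIcc, ?_⟩
  rw [Qmin, trace_add, Complex.add_re]
  exact le_csInf ⟨_, 0, left_mem_Icc.mpr zero_le_one, rfl⟩ fun _ ⟨s, hs, hx⟩ => hx ▸ hIcc hs

end QHT

end
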